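/- Each off-diagonal entry of Cᵀ C has mean zero and variance at most (N−P+1)/N², where C is the truncated Sylvester matrix built from i.i.d. ±1/√N chips. -/

import Mathlib

open MeasureTheory ProbabilityTheory

lemma chip_ae {Ω : Type*} [MeasureSpace Ω] {μ : Measure Ω} [IsProbabilityMeasure μ]
    {f : Ω → ℝ} (hf : Measurable f) {c : ℝ} (hc : 0 < c)
    (h1 : μ {ω | f ω = c} = ENNReal.ofReal (1 / 2))
    (h2 : μ {ω | f ω = -c} = ENNReal.ofReal (1 / 2)) :
    ∀ᵐ ω ∂μ, f ω = c ∨ f ω = -c := by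
  have hA : MeasurableSet {ω | f ω = c} := hf (measurableSet_singleton c)
  have hB : MeasurableSet {ω | f ω = -c} := hf (measurableSet_singleton (-c))
  have hd : Disjoint {ω | f ω = c} {ω | f ω = -c} := by
    rw [Set.disjoint_left]
    intro ω h1' h2'
    simp only [Set.mem_setOf_eq] at h1' h2'
    rw [h1'] at h2'
    linarith
  have hU : μ ({ω | f ω = c} ∪ {ω | f ω = -c}) = 1 := by
    rw [measure_union hd hB, h1, h2,
      ← ENNReal.ofReal_add (by norm_num) (by norm_num)]
    norm_num
  have hcompl : μ ({ω | f ω = c} ∪ {ω | f ω = -c})ᶜ = 0 := by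
    rw [measure_compl (hA.union hB) (measure_ne_top μ _), hU, measure_univ]
    simp
  rw [ae_iff]
  have hset : {ω | ¬(f ω = c ∨ f ω = -c)} = ({ω | f ω = c} ∪ {ω | f ω = -c})ᶜ := by
    ext ω; simp [not_or]
  rw [hset]
  exact hcompl

lemma chip_integral {Ω : Type*} [MeasureSpace Ω] {μ : Measure Ω} [IsProbabilityMeasure μ]
    {f : Ω → ℝ} (hf : Measurable f) {c : ℝ} (hc : 0 < c)
    (h1 : μ {ω | f ω = c} = ENNReal.ofReal (1 / 2))
    (h2 : μ {ω | f ω = -c} = ENNReal.ofReal (1 / 2)) :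
    ∫ ω, f ω ∂μ = 0 := by
  have hA : MeasurableSet {ω | f ω = c} := hf (measurableSet_singleton c)
  have hB : MeasurableSet {ω | f ω = -c} := hf (measurableSet_singleton (-c))
  have hae := chip_ae hf hc h1 h2
  have heq : f =ᵐ[μ] fun ω =>
      Set.indicator {ω | f ω = c} (fun _ => c) ω +
      Set.indicator {ω | f ω = -c} (fun _ => -c) ω := by
    filter_upwards [hae] with ω hω
    rcases hω with h | h
    · have hnB : ω ∉ {ω | f ω = -c} := by
        simp only [Set.mem_setOf_eq, h]
        intro hcc; linarith
      rw [Set.indicator_of_mem (show ω ∈ {ω | f ω = c} from h),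
        Set.indicator_of_notMem hnB, add_zero, h]
    · have hnA : ω ∉ {ω | f ω = c} := by
        simp only [Set.mem_setOf_eq, h]
        intro hcc; linarith
      rw [Set.indicator_of_mem (show ω ∈ {ω | f ω = -c} from h),
        Set.indicator_of_notMem hnA, zero_add, h]
  rw [integral_congr_ae heq,
    integral_add ((integrable_const c).indicator hA) ((integrable_const (-c)).indicator hB),
    integral_indicator_const _ hA, integral_indicator_const _ hB, measureReal_def, measureReal_def, h1, h2,
    ENNReal.toReal_ofReal (by norm_num)]
  simp [smul_eq_mul]

/-- The main computation, for abstract index maps `a b : Fin M → ℕ`. -/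
lemma gram_aux {Ω : Type*} [MeasureSpace Ω] (μ : Measure Ω) [IsProbabilityMeasure μ]
    {M : ℕ} (a b : Fin M → ℕ) (s : ℕ → Ω → ℝ)
    (hmeas : ∀ n, Measurable (s n))
    (hindep : iIndepFun s μ)
    (c : ℝ) (hc : 0 < c)
    (hdist : ∀ n, ((∃ i, a i = n) ∨ (∃ i, b i = n)) →
      μ {ω | s n ω = c} = ENNReal.ofReal (1 / 2) ∧
      μ {ω | s n ω = -c} = ENNReal.ofReal (1 / 2))
    (ha : Function.Injective a) (hb : Function.Injective b)
    (hab : ∀ i k, a i = b k → (i ≠ k ∧ b i ≠ a k)) :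
    (∫ ω, ∑ i, s (a i) ω * s (b i) ω ∂μ = 0) ∧
    (∫ ω, (∑ i, s (a i) ω * s (b i) ω) ^ 2 ∂μ = (M : ℝ) * c ^ 4) := by
  set good : ℕ → Prop := fun n => (∃ i, a i = n) ∨ (∃ i, b i = n) with hgood
  have hga : ∀ i, good (a i) := fun i => Or.inl ⟨i, rfl⟩
  have hgb : ∀ i, good (b i) := fun i => Or.inr ⟨i, rfl⟩
  have hae : ∀ n, good n → ∀ᵐ ω ∂μ, s n ω = c ∨ s n ω = -c := fun n hn =>
    chip_ae (hmeas n) hc (hdist n hn).1 (hdist n hn).2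
  have hbdd : ∀ n, good n → ∀ᵐ ω ∂μ, ‖s n ω‖ ≤ c := by
    intro n hn
    filter_upwards [hae n hn] with ω hω
    rcases hω with h | h <;> rw [h] <;> simp [abs_of_pos hc, hc.le]
  have hint : ∀ n, good n → Integrable (s n) μ := fun n hn =>
    Integrable.mono' (integrable_const c) (hmeas n).aestronglyMeasurable (hbdd n hn)
  have hint2 : ∀ m n, good m → good n →
      Integrable (fun ω => s m ω * s n ω) μ := by
    intro m n hm hn
    refine Integrable.mono' (integrable_const (c * c))
      ((hmeas m).mul (hmeas n)).aestronglyMeasurable ?_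
    filter_upwards [hbdd m hm, hbdd n hn] with ω h1 h2
    rw [norm_mul]
    exact mul_le_mul h1 h2 (norm_nonneg _) hc.le
  have hint3 : ∀ m n p, good m → good n → good p →
      Integrable (fun ω => s m ω * s n ω * s p ω) μ := by
    intro m n p hm hn hp
    refine Integrable.mono' (integrable_const (c * c * c))
      (((hmeas m).mul (hmeas n)).mul (hmeas p)).aestronglyMeasurable ?_
    filter_upwards [hbdd m hm, hbdd n hn, hbdd p hp] with ω h1 h2 h3
    rw [norm_mul, norm_mul]
    exact mul_le_mul (mul_le_mul h1 h2 (norm_nonneg _) hc.le) h3 (norm_nonneg _)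
      (by positivity)
  have hint4 : ∀ m n p q, good m → good n → good p → good q →
      Integrable (fun ω => s m ω * s n ω * (s p ω * s q ω)) μ := by
    intro m n p q hm hn hp hq
    refine Integrable.mono' (integrable_const (c * c * (c * c)))
      (((hmeas m).mul (hmeas n)).mul ((hmeas p).mul (hmeas q))).aestronglyMeasurable ?_
    filter_upwards [hbdd m hm, hbdd n hn, hbdd p hp, hbdd q hq] with ω h1 h2 h3 h4
    rw [norm_mul, norm_mul, norm_mul]
    exact mul_le_mul (mul_le_mul h1 h2 (norm_nonneg _) hc.le)
      (mul_le_mul h3 h4 (norm_nonneg _) hc.le) (by positivity) (by positivity)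
  have hmean : ∀ n, good n → ∫ ω, s n ω ∂μ = 0 := fun n hn =>
    chip_integral (hmeas n) hc (hdist n hn).1 (hdist n hn).2
  have hmul0 : ∀ m n, good m → good n → m ≠ n → ∫ ω, s m ω * s n ω ∂μ = 0 := by
    intro m n hm hn hmn
    have h := (hindep.indepFun hmn).integral_mul_eq_mul_integral (hint m hm).aestronglyMeasurable (hint n hn).aestronglyMeasurable
    calc ∫ ω, s m ω * s n ω ∂μ = integral μ (s m * s n) := rfl
      _ = (∫ ω, s m ω ∂μ) * ∫ ω, s n ω ∂μ := h
      _ = 0 := by rw [hmean m hm, zero_mul]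
  have hsq : ∀ n, good n →
      (fun ω => s n ω ^ 2) =ᵐ[μ] fun _ => c ^ 2 := by
    intro n hn
    filter_upwards [hae n hn] with ω hω
    rcases hω with h | h <;> rw [h] <;> ring
  -- quadruple product of pairwise distinct chips
  have hquad : ∀ n1 n2 n3 n4, good n1 → good n2 → good n3 → good n4 →
      n1 ≠ n2 → n1 ≠ n3 → n1 ≠ n4 → n2 ≠ n3 → n2 ≠ n4 → n3 ≠ n4 →
      ∫ ω, s n1 ω * s n2 ω * (s n3 ω * s n4 ω) ∂μ = 0 := by
    intro n1 n2 n3 n4 g1 g2 g3 g4 h12 h13 h14 h23 h24 h34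
    set T : Finset ℕ := {n1, n2, n3} with hT
    have hn4T : n4 ∉ T := by simp [hT, Ne.symm h14, Ne.symm h24, Ne.symm h34]
    have hTprod : (∏ x ∈ T, s x) = fun ω => s n1 ω * s n2 ω * s n3 ω := by
      funext ω
      rw [Finset.prod_apply, hT, Finset.prod_insert (by simp [h12, h13]),
        Finset.prod_insert (by simp [h23]), Finset.prod_singleton, mul_assoc]
    have hI : IndepFun (∏ x ∈ T, s x) (s n4) μ :=
      hindep.indepFun_finsetProd_of_notMem hmeas hn4T
    have hintT : Integrable (∏ x ∈ T, s x) μ := by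
      rw [hTprod]; exact hint3 n1 n2 n3 g1 g2 g3
    have h := hI.integral_mul_eq_mul_integral hintT.aestronglyMeasurable (hint n4 g4).aestronglyMeasurable
    calc ∫ ω, s n1 ω * s n2 ω * (s n3 ω * s n4 ω) ∂μ
        = ∫ ω, (∏ x ∈ T, s x) ω * s n4 ω ∂μ := by
          rw [hTprod]; congr 1; funext ω; ring
      _ = integral μ ((∏ x ∈ T, s x) * s n4) := rfl
      _ = (∫ ω, (∏ x ∈ T, s x) ω ∂μ) * ∫ ω, s n4 ω ∂μ := h
      _ = 0 := by rw [hmean n4 g4, mul_zero]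
  -- squared chip times two distinct chips
  have hsqmul : ∀ n1 n2 n3, good n1 → good n2 → good n3 → n2 ≠ n3 →
      ∫ ω, s n1 ω ^ 2 * (s n2 ω * s n3 ω) ∂μ = 0 := by
    intro n1 n2 n3 g1 g2 g3 h23
    have heq : (fun ω => s n1 ω ^ 2 * (s n2 ω * s n3 ω)) =ᵐ[μ]
        fun ω => c ^ 2 * (s n2 ω * s n3 ω) := by
      filter_upwards [hsq n1 g1] with ω hω
      rw [hω]
    rw [integral_congr_ae heq, integral_const_mul, hmul0 n2 n3 g2 g3 h23, mul_zero]
  -- the cross expectations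
  have hcross : ∀ i k : Fin M, i ≠ k →
      ∫ ω, s (a i) ω * s (b i) ω * (s (a k) ω * s (b k) ω) ∂μ = 0 := by
    intro i k hik
    have haa : a i ≠ a k := fun h => hik (ha h)
    have hbb : b i ≠ b k := fun h => hik (hb h)
    have habi : a i ≠ b i := fun h => (hab i i h).1 rfl
    have habk : a k ≠ b k := fun h => (hab k k h).1 rfl
    by_cases h1 : a i = b k
    · -- s (a i) = s (b k); product is s(a i)^2 * (s(b i) * s(a k))
      have hba : b i ≠ a k := (hab i k h1).2
      have heq : ∀ ω, s (a i) ω * s (b i) ω * (s (a k) ω * s (b k) ω)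
          = s (a i) ω ^ 2 * (s (b i) ω * s (a k) ω) := by
        intro ω; rw [← h1]; ring
      simp only [heq]
      exact hsqmul (a i) (b i) (a k) (hga i) (hgb i) (hga k) hba
    · by_cases h2 : b i = a k
      · have hba : a i ≠ b k := h1
        have heq : ∀ ω, s (a i) ω * s (b i) ω * (s (a k) ω * s (b k) ω)
            = s (b i) ω ^ 2 * (s (a i) ω * s (b k) ω) := by
          intro ω; rw [h2]; ring
        simp only [heq]
        exact hsqmul (b i) (a i) (b k) (hgb i) (hga i) (hgb k) hba
      · exact hquad (a i) (b i) (a k) (b k) (hga i) (hgb i) (hga k) (hgb k)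
          habi haa h1 h2 hbb habk
  -- diagonal expectations
  have hdiag : ∀ i : Fin M,
      ∫ ω, s (a i) ω * s (b i) ω * (s (a i) ω * s (b i) ω) ∂μ = c ^ 4 := by
    intro i
    have heq : (fun ω => s (a i) ω * s (b i) ω * (s (a i) ω * s (b i) ω)) =ᵐ[μ]
        fun _ => c ^ 4 := by
      filter_upwards [hsq (a i) (hga i), hsq (b i) (hgb i)] with ω h1 h2
      have : s (a i) ω * s (b i) ω * (s (a i) ω * s (b i) ω)
          = s (a i) ω ^ 2 * s (b i) ω ^ 2 := by ring
      rw [this, h1, h2]; ring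
    rw [integral_congr_ae heq, integral_const, probReal_univ]
    simp
  constructor
  · rw [integral_finset_sum _ (fun i _ => hint2 (a i) (b i) (hga i) (hgb i))]
    refine Finset.sum_eq_zero fun i _ => ?_
    exact hmul0 (a i) (b i) (hga i) (hgb i) (fun h => (hab i i h).1 rfl)
  · have hexp : ∀ ω : Ω, (∑ i, s (a i) ω * s (b i) ω) ^ 2
        = ∑ i, ∑ k, s (a i) ω * s (b i) ω * (s (a k) ω * s (b k) ω) := by
      intro ω
      rw [sq, Finset.sum_mul_sum]
    simp only [hexp]
    rw [integral_finset_sum _ (fun i _ =>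
      integrable_finset_sum _ (fun k _ =>
        hint4 (a i) (b i) (a k) (b k) (hga i) (hgb i) (hga k) (hgb k)))]
    have hterm : ∀ i : Fin M,
        ∫ ω, ∑ k, s (a i) ω * s (b i) ω * (s (a k) ω * s (b k) ω) ∂μ = c ^ 4 := by
      intro i
      rw [integral_finset_sum _ (fun k _ =>
        hint4 (a i) (b i) (a k) (b k) (hga i) (hgb i) (hga k) (hgb k))]
      have : ∀ k : Fin M, k ∈ Finset.univ →
          ∫ ω, s (a i) ω * s (b i) ω * (s (a k) ω * s (b k) ω) ∂μ
          = if k = i then c ^ 4 else 0 := by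
        intro k _
        by_cases hk : k = i
        · subst hk; simp [hdiag k]
        · simp [hk, hcross i k (fun h => hk h.symm)]
      rw [Finset.sum_congr rfl this, Finset.sum_ite_eq' Finset.univ i (fun _ => c ^ 4)]
      simp
    rw [Finset.sum_congr rfl (fun i _ => hterm i)]
    simp [Finset.card_univ, mul_comm]

/-- For i.i.d. `±1/√N` chips, each off-diagonal entry of `Cᵀ C` (where
`C_{ij} = s(P+i−j)` is the truncated Sylvester matrix) has mean zero and
variance at most `(N−P+1)/N²`. -/
theorem sylvester_gram_offdiag_variance {Ω : Type*} [MeasureSpace Ω]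
    (μ : Measure Ω) [IsProbabilityMeasure μ] (N P : ℕ) (hP : 1 ≤ P) (hNP : P < N)
    (s : ℕ → Ω → ℝ)
    (hmeas : ∀ n, Measurable (s n))
    (hindep : iIndepFun s μ)
    (hdist : ∀ n, 1 ≤ n → n ≤ N →
      μ {ω | s n ω = 1 / Real.sqrt N} = ENNReal.ofReal (1 / 2) ∧
      μ {ω | s n ω = -(1 / Real.sqrt N)} = ENNReal.ofReal (1 / 2))
    (j j' : Fin P) (hjj' : j ≠ j') :
    (∫ ω, ∑ i : Fin (N - P + 1),
        s (P + (i : ℕ) + 1 - (j : ℕ) - 1) ω * s (P + (i : ℕ) + 1 - (j' : ℕ) - 1) ω ∂μ = 0) ∧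
    (∫ ω, (∑ i : Fin (N - P + 1),
        s (P + (i : ℕ) + 1 - (j : ℕ) - 1) ω * s (P + (i : ℕ) + 1 - (j' : ℕ) - 1) ω) ^ 2 ∂μ ≤
      (N - P + 1 : ℝ) / (N : ℝ) ^ 2) := by
  have hN0 : 0 < N := lt_of_le_of_lt (Nat.zero_le P) hNP
  have hNR : (0 : ℝ) < N := by exact_mod_cast hN0
  set c : ℝ := 1 / Real.sqrt N with hcdef
  have hc : 0 < c := by
    rw [hcdef]
    positivity
  have hj : (j : ℕ) < P := j.isLt
  have hj' : (j' : ℕ) < P := j'.isLt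
  have hjj'n : (j : ℕ) ≠ (j' : ℕ) := fun h => hjj' (Fin.ext h)
  have key := gram_aux μ (fun i : Fin (N - P + 1) => P + (i : ℕ) + 1 - (j : ℕ) - 1)
    (fun i : Fin (N - P + 1) => P + (i : ℕ) + 1 - (j' : ℕ) - 1) s hmeas hindep c hc
    (by
      intro n hn
      rcases hn with ⟨i, hi⟩ | ⟨i, hi⟩ <;>
      · have h1 := i.isLt
        exact hdist n (by omega) (by omega))
    (by
      intro i k h
      simp only at h
      have hik := i.isLt
      have hkk := k.isLt
      exact Fin.ext (by omega))
    (by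
      intro i k h
      simp only at h
      have hik := i.isLt
      have hkk := k.isLt
      exact Fin.ext (by omega))
    (by
      intro i k h
      have hik := i.isLt
      have hkk := k.isLt
      constructor
      · intro hik'
        rw [hik'] at h
        omega
      · intro hcon
        omega)
  refine ⟨key.1, ?_⟩
  rw [key.2]
  have hc4 : c ^ 4 = 1 / (N : ℝ) ^ 2 := by
    rw [hcdef, div_pow, one_pow]
    rw [show (Real.sqrt N) ^ 4 = ((Real.sqrt N) ^ 2) ^ 2 by ring, Real.sq_sqrt hNR.le]
  rw [hc4]
  have hcast : ((N - P + 1 : ℕ) : ℝ) = (N : ℝ) - (P : ℝ) + 1 := by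
    push_cast [Nat.cast_sub hNP.le]
    ring
  rw [hcast]
  rw [mul_one_div]
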